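/- Let Λ be a finite nonempty set, let m : Λ × Λ → [0,∞) with ∑_{j∈Λ} m(i,j) ≤ 1 for every i ∈ Λ, and let α ≥ 0, K ∈ ℝ and β, γ > 0. Define H(x,y) = exp( −(γ/β) ∑_{i∈Λ} x_i y_i ) and (𝒢^m f)(x) := ∑_{i∈Λ} [ α( ∑_{j∈Λ} m(i,j)x_j − x_i ) ∂f/∂x_i (x) + γ x_i(K − x_i) ∂f/∂x_i (x) + β x_i ∂²f/∂x_i² (x) ]. Then there exists a finite constant C such that for all x, y ∈ [0,∞)^Λ: | 𝒢^m( H(·,y) )(x) | ≤ C ( |x||y| + |x| + |y| ), where |x| := ∑_{i∈Λ} x_i. -/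

import Mathlib

open Finset

/-- The generator (100) of the finite system (49) of interacting Feller diffusions
with logistic growth, applied to a function `f` of the coordinates. -/
noncomputable def logGen {Λ : Type*} [Fintype Λ] [DecidableEq Λ]
    (m : Λ → Λ → ℝ) (α K β γ : ℝ) (f : (Λ → ℝ) → ℝ) (x : Λ → ℝ) : ℝ :=
  ∑ i, ((α * ((∑ j, m i j * x j) - x i) + γ * x i * (K - x i)) *
          deriv (fun t => f (Function.update x i t)) (x i) +
        β * x i * iteratedDeriv 2 (fun t => f (Function.update x i t)) (x i))

private lemma expAff_hasDerivAt (d e s : ℝ) :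
    HasDerivAt (fun t => Real.exp (d * t + e)) (d * Real.exp (d * s + e)) s := by
  have h1 : HasDerivAt (fun t : ℝ => d * t + e) d s := by
    simpa using ((hasDerivAt_id s).const_mul d).add_const e
  simpa [mul_comm] using h1.exp

private lemma expAff_deriv (d e s : ℝ) :
    deriv (fun t => Real.exp (d * t + e)) s = d * Real.exp (d * s + e) :=
  (expAff_hasDerivAt d e s).deriv

private lemma expAff_iteratedDeriv2 (d e s : ℝ) :
    iteratedDeriv 2 (fun t => Real.exp (d * t + e)) s = d ^ 2 * Real.exp (d * s + e) := by
  have h : iteratedDeriv 2 (fun t => Real.exp (d * t + e)) =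
      deriv (deriv (fun t => Real.exp (d * t + e))) := by
    rw [show (2:ℕ) = 1 + 1 from rfl, iteratedDeriv_succ, iteratedDeriv_one]
  have hd : deriv (fun t => Real.exp (d * t + e)) = fun s => d * Real.exp (d * s + e) := by
    funext u; exact expAff_deriv d e u
  have h2 : HasDerivAt (fun u => d * Real.exp (d * u + e)) (d * (d * Real.exp (d * s + e))) s :=
    (expAff_hasDerivAt d e s).const_mul d
  rw [h, hd, h2.deriv]; ring

private lemma zexp_le_one (z : ℝ) : z * Real.exp (-z) ≤ 1 := by
  rw [Real.exp_neg, ← div_eq_mul_inv, div_le_one (Real.exp_pos z)]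
  linarith [Real.add_one_le_exp z]

private lemma sum_update_mul {Λ : Type*} [Fintype Λ] [DecidableEq Λ]
    (x y : Λ → ℝ) (i : Λ) (t : ℝ) :
    ∑ j, Function.update x i t j * y j = t * y i + ∑ j ∈ univ.erase i, x j * y j := by
  rw [← Finset.add_sum_erase _ _ (mem_univ i), Function.update_self]
  congr 1
  exact Finset.sum_congr rfl fun j hj => by
    rw [Function.update_of_ne (Finset.ne_of_mem_erase hj)]

set_option maxHeartbeats 1000000 in
/-- The growth bound (105): `|𝒢^m H(·,y)(x)| ≤ C(|x||y| + |x| + |y|)` for the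
self-duality function `H(x,y) = exp(-(γ/β)⟨x,y⟩)`. -/
theorem stmt15 {Λ : Type*} [Fintype Λ] [DecidableEq Λ] [Nonempty Λ]
    (m : Λ → Λ → ℝ) (hm : ∀ i j, 0 ≤ m i j) (hmrow : ∀ i, (∑ j, m i j) ≤ 1)
    (α K β γ : ℝ) (hα : 0 ≤ α) (hβ : 0 < β) (hγ : 0 < γ) :
    ∃ C : ℝ, ∀ x y : Λ → ℝ, (∀ i, 0 ≤ x i) → (∀ i, 0 ≤ y i) →
      |logGen m α K β γ (fun x' => Real.exp (-(γ / β) * ∑ i, x' i * y i)) x| ≤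
        C * ((∑ i, x i) * (∑ i, y i) + (∑ i, x i) + (∑ i, y i)) := by
  classical
  have hr0 : (0:ℝ) < γ / β := div_pos hγ hβ
  refine ⟨2*α*(γ/β) + γ*(γ/β) * |K| + γ, ?_⟩
  intro x y hx hy
  set X := ∑ i, x i with hXdef
  set Y := ∑ i, y i with hYdef
  have hX : 0 ≤ X := Finset.sum_nonneg fun i _ => hx i
  have hY : 0 ≤ Y := Finset.sum_nonneg fun i _ => hy i
  have hxX : ∀ i, x i ≤ X := fun i => Finset.single_le_sum (fun j _ => hx j) (mem_univ i)
  have hyY : ∀ i, y i ≤ Y := fun i => Finset.single_le_sum (fun j _ => hy j) (mem_univ i)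
  set S := ∑ i, x i * y i with hSdef
  have hS0 : 0 ≤ S := Finset.sum_nonneg fun i _ => mul_nonneg (hx i) (hy i)
  have hSxy : ∀ i, x i * y i ≤ S := fun i =>
    Finset.single_le_sum (fun j _ => mul_nonneg (hx j) (hy j)) (mem_univ i)
  have hSXY : S ≤ X * Y := by
    rw [hSdef, hXdef, Finset.sum_mul]
    exact Finset.sum_le_sum fun i _ => mul_le_mul_of_nonneg_left (hyY i) (hx i)
  set H := Real.exp (-(γ/β) * S) with hHdef
  have hH0 : 0 < H := Real.exp_pos _
  have hH1 : H ≤ 1 := Real.exp_le_one_iff.mpr (by nlinarith)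
  have hkey : ∀ i, (γ/β) * (x i * y i) * H ≤ 1 := by
    intro i
    have h1 : H ≤ Real.exp (-((γ/β) * (x i * y i))) := by
      rw [hHdef]
      apply Real.exp_le_exp.mpr
      nlinarith [hSxy i, hr0.le]
    calc (γ/β) * (x i * y i) * H
        ≤ (γ/β) * (x i * y i) * Real.exp (-((γ/β) * (x i * y i))) :=
          mul_le_mul_of_nonneg_left h1
            (mul_nonneg hr0.le (mul_nonneg (hx i) (hy i)))
      _ ≤ 1 := zexp_le_one _
  have hrw : logGen m α K β γ (fun x' => Real.exp (-(γ/β) * ∑ i, x' i * y i)) x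
      = ∑ i, ((α * ((∑ j, m i j * x j) - x i) + γ * x i * (K - x i)) * (-((γ/β) * y i) * H)
              + β * x i * (((γ/β) * y i)^2 * H)) := by
    unfold logGen
    refine Finset.sum_congr rfl fun i _ => ?_
    have hfun : (fun t => Real.exp (-(γ/β) * ∑ j, Function.update x i t j * y j))
        = fun t => Real.exp ((-((γ/β) * y i)) * t
            + (-((γ/β) * ∑ j ∈ univ.erase i, x j * y j))) := by
      funext t
      congr 1
      rw [sum_update_mul]
      ring
    have hpt : (-((γ/β) * y i)) * (x i) + (-((γ/β) * ∑ j ∈ univ.erase i, x j * y j))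
        = -(γ/β) * S := by
      rw [hSdef, ← Finset.add_sum_erase univ (fun j => x j * y j) (mem_univ i)]
      ring
    simp only
    rw [hfun, expAff_deriv, expAff_iteratedDeriv2, hpt, hHdef]
    ring
  rw [hrw]
  have hbound : ∀ i, |(α * ((∑ j, m i j * x j) - x i) + γ * x i * (K - x i)) * (-((γ/β) * y i) * H)
              + β * x i * (((γ/β) * y i)^2 * H)|
      ≤ 2*α*(γ/β)*X*(y i) + γ*(γ/β) * |K| * (x i * y i) + γ*(x i) + γ*(y i) := by
    intro i
    set A := ∑ j, m i j * x j with hAdef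
    have hA0 : 0 ≤ A := Finset.sum_nonneg fun j _ => mul_nonneg (hm i j) (hx j)
    have hAX : A ≤ X := by
      rw [hAdef, hXdef]
      refine Finset.sum_le_sum fun j _ => ?_
      have hmij : m i j ≤ 1 :=
        le_trans (Finset.single_le_sum (fun k _ => hm i k) (mem_univ j)) (hmrow i)
      nlinarith [hx j, hm i j]
    have h1 : (γ/β) * (x i * y i) * H ≤ 1 := hkey i
    have hK : |K - x i| ≤ |K| + x i := by
      rw [sub_eq_add_neg]
      exact (abs_add_le _ _).trans (by rw [abs_neg, abs_of_nonneg (hx i)])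
    have hP : |α * (A - x i) + γ * x i * (K - x i)| ≤ α*(2*X) + γ*(x i) * |K| + γ*(x i)^2 := by
      have h2 : |A - x i| ≤ 2*X := abs_le.mpr ⟨by linarith [hx i, hxX i], by linarith [hx i, hxX i]⟩
      calc |α * (A - x i) + γ * x i * (K - x i)|
          ≤ |α * (A - x i)| + |γ * x i * (K - x i)| := abs_add_le _ _
        _ = α * |A - x i| + γ * x i * |K - x i| := by
            rw [abs_mul, abs_mul, abs_of_nonneg hα,
              abs_of_nonneg (mul_nonneg hγ.le (hx i))]
        _ ≤ α*(2*X) + γ*(x i) * |K| + γ*(x i)^2 := by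
            nlinarith [mul_nonneg hγ.le (hx i), hx i, hγ.le]
    have habs1 : |(α * (A - x i) + γ * x i * (K - x i)) * (-((γ/β) * y i) * H)|
        = |α * (A - x i) + γ * x i * (K - x i)| * ((γ/β) * y i * H) := by
      rw [abs_mul]
      congr 1
      rw [abs_mul, abs_neg, abs_of_nonneg (mul_nonneg hr0.le (hy i)), abs_of_pos hH0]
    have habs2 : |β * x i * (((γ/β) * y i)^2 * H)| = β * x i * (((γ/β) * y i)^2 * H) :=
      abs_of_nonneg (mul_nonneg (mul_nonneg hβ.le (hx i)) (mul_nonneg (sq_nonneg _) hH0.le))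
    have h2' : β * x i * (((γ/β) * y i)^2 * H) ≤ γ * y i := by
      have heq : β * x i * (((γ/β) * y i)^2 * H) = (γ * y i) * ((γ/β) * (x i * y i) * H) := by
        field_simp
      rw [heq]
      calc (γ * y i) * ((γ/β) * (x i * y i) * H) ≤ (γ * y i) * 1 :=
            mul_le_mul_of_nonneg_left h1 (mul_nonneg hγ.le (hy i))
        _ = γ * y i := mul_one _
    have h3' : γ*(x i)^2 * ((γ/β) * y i * H) ≤ γ * x i := by
      have heq : γ*(x i)^2 * ((γ/β) * y i * H) = (γ * x i) * ((γ/β) * (x i * y i) * H) := by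
        ring
      rw [heq]
      calc (γ * x i) * ((γ/β) * (x i * y i) * H) ≤ (γ * x i) * 1 :=
            mul_le_mul_of_nonneg_left h1 (mul_nonneg hγ.le (hx i))
        _ = γ * x i := mul_one _
    have hyH : 0 ≤ (γ/β) * y i * H := mul_nonneg (mul_nonneg hr0.le (hy i)) hH0.le
    calc |(α * (A - x i) + γ * x i * (K - x i)) * (-((γ/β) * y i) * H)
              + β * x i * (((γ/β) * y i)^2 * H)|
        ≤ |(α * (A - x i) + γ * x i * (K - x i)) * (-((γ/β) * y i) * H)|
            + |β * x i * (((γ/β) * y i)^2 * H)| := abs_add_le _ _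
      _ ≤ (α*(2*X) + γ*(x i) * |K| + γ*(x i)^2) * ((γ/β) * y i * H) + γ * y i := by
          rw [habs1, habs2]
          exact add_le_add (mul_le_mul_of_nonneg_right hP hyH) h2'
      _ ≤ 2*α*(γ/β)*X*(y i) + γ*(γ/β) * |K| * (x i * y i) + γ*(x i) + γ*(y i) := by
          nlinarith [h3',
            mul_le_mul_of_nonneg_left hH1
              (mul_nonneg (mul_nonneg (mul_nonneg (by linarith : (0:ℝ) ≤ 2*α) hX) hr0.le) (hy i)),
            mul_le_mul_of_nonneg_left hH1
              (mul_nonneg (mul_nonneg (mul_nonneg (mul_nonneg hγ.le (hx i)) (abs_nonneg K)) hr0.le) (hy i))]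
  calc |∑ i, ((α * ((∑ j, m i j * x j) - x i) + γ * x i * (K - x i)) * (-((γ/β) * y i) * H)
              + β * x i * (((γ/β) * y i)^2 * H))|
      ≤ ∑ i, |(α * ((∑ j, m i j * x j) - x i) + γ * x i * (K - x i)) * (-((γ/β) * y i) * H)
              + β * x i * (((γ/β) * y i)^2 * H)| := Finset.abs_sum_le_sum_abs _ _
    _ ≤ ∑ i, (2*α*(γ/β)*X*(y i) + γ*(γ/β) * |K| * (x i * y i) + γ*(x i) + γ*(y i)) :=
        Finset.sum_le_sum fun i _ => hbound i
    _ = 2*α*(γ/β)*X*Y + γ*(γ/β) * |K| * S + γ*X + γ*Y := by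
        rw [hYdef, hXdef, hSdef]
        rw [Finset.sum_add_distrib, Finset.sum_add_distrib, Finset.sum_add_distrib,
          ← Finset.mul_sum, ← Finset.mul_sum, ← Finset.mul_sum, ← Finset.mul_sum]
    _ ≤ (2*α*(γ/β) + γ*(γ/β) * |K| + γ) * (X*Y + X + Y) := by
        nlinarith [mul_nonneg hX hY, abs_nonneg K, hr0.le, hα, hγ.le, hS0, hSXY,
          mul_nonneg (mul_nonneg hα hr0.le) hX, mul_nonneg (mul_nonneg hα hr0.le) hY,
          mul_nonneg (mul_nonneg (mul_nonneg hγ.le hr0.le) (abs_nonneg K)) (by nlinarith : (0:ℝ) ≤ X*Y - S + X + Y)]
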